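/- (Risk bound in the stable phase.) For GD on separable logistic regression with stepsize η > 0, suppose at step s we have L(w_s) ≤ 1/η. Define F(w) = (1/n) Σᵢ exp(−xᵢᵀw). Then for every t > s with γ²η(t−s) ≥ 1: L(w_t) ≤ (2 F(w_s) + ln²(γ²η(t−s)))/(γ²η(t−s)). -/

import Mathlib

open Finset

/-- The average logistic loss L(w) = (1/n) Σᵢ ln(1 + exp(−⟨xᵢ, w⟩)). -/
noncomputable def logisticRisk {d n : ℕ} (x : Fin n → EuclideanSpace ℝ (Fin d))
    (w : EuclideanSpace ℝ (Fin d)) : ℝ :=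
  (1 / n) * ∑ i, Real.log (1 + Real.exp (-(inner ℝ (x i) w : ℝ)))

/-- The gradient ∇L(w) = (1/n) Σᵢ ℓ′(⟨xᵢ,w⟩) xᵢ with ℓ′(s) = −1/(1+eˢ). -/
noncomputable def logisticGrad {d n : ℕ} (x : Fin n → EuclideanSpace ℝ (Fin d))
    (w : EuclideanSpace ℝ (Fin d)) : EuclideanSpace ℝ (Fin d) :=
  (n : ℝ)⁻¹ • ∑ i, (-(1 + Real.exp ((inner ℝ (x i) w : ℝ)))⁻¹) • x i

/-- The gradient potential G(w) = (1/n) Σᵢ 1/(1 + exp(⟨xᵢ, w⟩)). -/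
noncomputable def gradPotential {d n : ℕ} (x : Fin n → EuclideanSpace ℝ (Fin d))
    (w : EuclideanSpace ℝ (Fin d)) : ℝ :=
  (1 / n) * ∑ i, (1 + Real.exp ((inner ℝ (x i) w : ℝ)))⁻¹

/-- The exponential potential F(w) = (1/n) Σᵢ exp(−⟨xᵢ, w⟩). -/
noncomputable def expPotential {d n : ℕ} (x : Fin n → EuclideanSpace ℝ (Fin d))
    (w : EuclideanSpace ℝ (Fin d)) : ℝ :=
  (1 / n) * ∑ i, Real.exp (-(inner ℝ (x i) w : ℝ))


lemma exp_le_quad {δ : ℝ} (h : |δ| ≤ 1) : Real.exp δ ≤ 1 + δ + (9/10) * δ^2 := by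
  have hb := Real.exp_bound h (by norm_num : 0 < 3)
  have h1 : ∑ i ∈ Finset.range 3, δ ^ i / (Nat.factorial i) = 1 + δ + δ^2/2 := by
    simp [Finset.sum_range_succ, Nat.factorial]
  rw [h1, show Nat.succ 3 = 4 from rfl, show Nat.factorial 3 = 6 from rfl] at hb
  have h2 : |δ| ^ 3 ≤ δ ^ 2 := by
    have e : |δ|^3 = |δ| * |δ|^2 := by ring
    rw [e, sq_abs]
    nlinarith [abs_nonneg δ, sq_nonneg δ]
  have h3 := (abs_le.mp hb).2
  push_cast at h3
  nlinarith [h3, h2]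










lemma key_ident (z δ : ℝ) :
    (1 + Real.exp (-z)) * (1 + (1 + Real.exp z)⁻¹ * (Real.exp δ - 1)) = 1 + Real.exp (-(z - δ)) := by
  have h : (1 + Real.exp z) ≠ 0 := by positivity
  rw [Real.exp_neg, show -(z-δ) = δ - z by ring, Real.exp_sub]
  have h2 : Real.exp z ≠ 0 := Real.exp_ne_zero z
  field_simp
  ring

lemma inner_pos (z δ : ℝ) : 0 < 1 + (1 + Real.exp z)⁻¹ * (Real.exp δ - 1) := by
  have h1 : (0:ℝ) < 1 + Real.exp (-(z - δ)) := by positivity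
  have h2 : (0:ℝ) < 1 + Real.exp (-z) := by positivity
  nlinarith [key_ident z δ]

lemma ell_smooth (z : ℝ) {δ : ℝ} (h : |δ| ≤ 1) :
    Real.log (1 + Real.exp (-(z - δ))) ≤
      Real.log (1 + Real.exp (-z)) + (1 + Real.exp z)⁻¹ * δ
        + (9/10) * ((1 + Real.exp z)⁻¹ * δ^2) := by
  have hpos := inner_pos z δ
  have hlog : Real.log (1 + Real.exp (-(z - δ))) =
      Real.log (1 + Real.exp (-z)) + Real.log (1 + (1 + Real.exp z)⁻¹ * (Real.exp δ - 1)) := by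
    rw [← key_ident z δ, Real.log_mul (by positivity) (ne_of_gt hpos)]
  rw [hlog]
  have h2 := Real.log_le_sub_one_of_pos hpos
  have h3 : Real.exp δ - 1 ≤ δ + (9/10) * δ^2 := by linarith [exp_le_quad h]
  have hφ0 : (0:ℝ) < (1 + Real.exp z)⁻¹ := by positivity
  nlinarith [mul_le_mul_of_nonneg_left h3 hφ0.le]

lemma ell_convex (a b : ℝ) :
    Real.log (1 + Real.exp (-a)) - (1 + Real.exp a)⁻¹ * (b - a) ≤ Real.log (1 + Real.exp (-b)) := by
  set φ := (1 + Real.exp a)⁻¹ with hφdef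
  have hφ0 : (0:ℝ) < φ := by positivity
  have hφ1 : φ ≤ 1 := by
    rw [hφdef, inv_le_one_iff₀]
    right; linarith [Real.exp_pos a]
  have hconv : Real.exp (φ • (a-b) + (1-φ) • (0:ℝ)) ≤ φ • Real.exp (a-b) + (1-φ) • Real.exp 0 :=
    convexOn_exp.2 (Set.mem_univ (a-b)) (Set.mem_univ (0:ℝ)) hφ0.le (by linarith) (by ring)
  simp only [smul_eq_mul, mul_zero, add_zero, Real.exp_zero, mul_one] at hconv
  have hkey := key_ident a (a - b)
  have hpos := inner_pos a (a - b)
  rw [show -(a - (a - b)) = -b by ring] at hkey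
  have hlog : Real.log (1 + Real.exp (-b)) =
      Real.log (1 + Real.exp (-a)) + Real.log (1 + φ * (Real.exp (a-b) - 1)) := by
    rw [← hkey, Real.log_mul (by positivity) (ne_of_gt hpos)]
  rw [hlog]
  have h4 : φ * (a - b) ≤ Real.log (1 + φ * (Real.exp (a-b) - 1)) := by
    calc φ * (a - b) = Real.log (Real.exp (φ * (a-b))) := (Real.log_exp _).symm
    _ ≤ Real.log (1 + φ * (Real.exp (a-b) - 1)) := by
        apply Real.log_le_log (Real.exp_pos _)
        linarith
  nlinarith [h4]

lemma phi_le_ell (z : ℝ) : (1 + Real.exp z)⁻¹ ≤ Real.log (1 + Real.exp (-z)) := by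
  have h1 : (0:ℝ) < 1 + Real.exp (-z) := by positivity
  have h := Real.log_le_sub_one_of_pos (inv_pos.mpr h1)
  rw [Real.log_inv] at h
  have h2 : 1 - (1 + Real.exp (-z))⁻¹ = (1 + Real.exp z)⁻¹ := by
    rw [Real.exp_neg]
    have h3 := (Real.exp_pos z).ne'
    have h4 : (1:ℝ) + (Real.exp z)⁻¹ ≠ 0 := by positivity
    field_simp
    ring
  linarith [h2 ▸ (by linarith : 1 - (1 + Real.exp (-z))⁻¹ ≤ Real.log (1 + Real.exp (-z)))]

lemma ell_nonneg (z : ℝ) : 0 ≤ Real.log (1 + Real.exp (-z)) :=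
  Real.log_nonneg (by linarith [Real.exp_pos (-z)])

lemma ell_le_exp (z : ℝ) : Real.log (1 + Real.exp (-z)) ≤ Real.exp (-z) := by
  have := Real.log_le_sub_one_of_pos (show (0:ℝ) < 1 + Real.exp (-z) by positivity)
  linarith

lemma grad_inner {d n : ℕ} (x : Fin n → EuclideanSpace ℝ (Fin d))
    (v u : EuclideanSpace ℝ (Fin d)) :
    (inner ℝ (logisticGrad x v) u : ℝ) =
      (n:ℝ)⁻¹ * ∑ i, (-(1 + Real.exp ((inner ℝ (x i) v : ℝ)))⁻¹) * (inner ℝ (x i) u : ℝ) := by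
  unfold logisticGrad
  rw [real_inner_smul_left, sum_inner]
  congr 1
  exact Finset.sum_congr rfl fun i _ => by rw [real_inner_smul_left]

lemma grad_norm_le {d n : ℕ} (x : Fin n → EuclideanSpace ℝ (Fin d))
    (hx : ∀ i, ‖x i‖ ≤ 1) (v : EuclideanSpace ℝ (Fin d)) :
    ‖logisticGrad x v‖ ≤ gradPotential x v := by
  unfold logisticGrad gradPotential
  rw [norm_smul]
  have h1 : ‖∑ i, (-(1 + Real.exp ((inner ℝ (x i) v : ℝ)))⁻¹) • x i‖
      ≤ ∑ i, (1 + Real.exp ((inner ℝ (x i) v : ℝ)))⁻¹ := by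
    refine (norm_sum_le _ _).trans (Finset.sum_le_sum fun i _ => ?_)
    rw [norm_smul, norm_neg]
    
    have hφ : (0:ℝ) < (1 + Real.exp ((inner ℝ (x i) v : ℝ)))⁻¹ := by positivity
    rw [Real.norm_eq_abs, abs_of_pos hφ]
    nlinarith [hx i, norm_nonneg (x i)]
  rw [Real.norm_eq_abs, abs_of_nonneg (by positivity : (0:ℝ) ≤ (n:ℝ)⁻¹), one_div]
  exact mul_le_mul_of_nonneg_left h1 (by positivity)









lemma G_le_L {d n : ℕ} (x : Fin n → EuclideanSpace ℝ (Fin d)) (v : EuclideanSpace ℝ (Fin d)) :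
    gradPotential x v ≤ logisticRisk x v := by
  unfold gradPotential logisticRisk
  refine mul_le_mul_of_nonneg_left (Finset.sum_le_sum fun i _ => phi_le_ell _) (by positivity)

lemma L_nonneg {d n : ℕ} (x : Fin n → EuclideanSpace ℝ (Fin d)) (v : EuclideanSpace ℝ (Fin d)) :
    0 ≤ logisticRisk x v := by
  unfold logisticRisk
  exact mul_nonneg (by positivity) (Finset.sum_nonneg fun i _ => ell_nonneg _)

lemma L_le_F {d n : ℕ} (x : Fin n → EuclideanSpace ℝ (Fin d)) (v : EuclideanSpace ℝ (Fin d)) :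
    logisticRisk x v ≤ expPotential x v := by
  unfold logisticRisk expPotential
  exact mul_le_mul_of_nonneg_left (Finset.sum_le_sum fun i _ => ell_le_exp _) (by positivity)

lemma G_nonneg {d n : ℕ} (x : Fin n → EuclideanSpace ℝ (Fin d)) (v : EuclideanSpace ℝ (Fin d)) :
    0 ≤ gradPotential x v := by
  unfold gradPotential
  exact mul_nonneg (by positivity) (Finset.sum_nonneg fun i _ => by positivity)


lemma descent {d n : ℕ} (x : Fin n → EuclideanSpace ℝ (Fin d))
    (hx : ∀ i, ‖x i‖ ≤ 1) {η : ℝ} (hη : 0 < η) (v : EuclideanSpace ℝ (Fin d))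
    (hL : logisticRisk x v ≤ 1 / η) :
    logisticRisk x (v - η • logisticGrad x v) ≤ logisticRisk x v := by
  set g := logisticGrad x v with hg
  have hGL : gradPotential x v ≤ logisticRisk x v := G_le_L x v
  have hgn : ‖g‖ ≤ gradPotential x v := grad_norm_le x hx v
  have hL0 : 0 ≤ logisticRisk x v := L_nonneg x v
  have hG0 : 0 ≤ gradPotential x v := G_nonneg x v
  have hηL : η * logisticRisk x v ≤ 1 := by rw [le_div_iff₀ hη] at hL; linarith
  have hηG : η * gradPotential x v ≤ 1 := le_trans (by nlinarith) hηL
  have hai : ∀ i, |(inner ℝ (x i) g : ℝ)| ≤ ‖g‖ := fun i => by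
    calc |(inner ℝ (x i) g : ℝ)| ≤ ‖x i‖ * ‖g‖ := abs_real_inner_le_norm _ _
    _ ≤ ‖g‖ := by nlinarith [norm_nonneg g, hx i]
  have hδ : ∀ i, |η * (inner ℝ (x i) g : ℝ)| ≤ 1 := fun i => by
    rw [abs_mul, abs_of_pos hη]
    calc η * |(inner ℝ (x i) g : ℝ)| ≤ η * gradPotential x v := by nlinarith [hai i, hgn]
    _ ≤ 1 := hηG
  have hz' : ∀ i, (inner ℝ (x i) (v - η • g) : ℝ)
      = (inner ℝ (x i) v : ℝ) - η * (inner ℝ (x i) g : ℝ) := fun i => by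
    rw [inner_sub_right, real_inner_smul_right]
  have hS1 : (n:ℝ)⁻¹ * ∑ i, ((1 + Real.exp ((inner ℝ (x i) v : ℝ)))⁻¹ * (inner ℝ (x i) g : ℝ))
      = -(‖g‖^2) := by
    have h1 := grad_inner x v g
    rw [← hg, real_inner_self_eq_norm_sq] at h1
    have e : ∑ i, (-(1 + Real.exp ((inner ℝ (x i) v : ℝ)))⁻¹ * (inner ℝ (x i) g : ℝ))
        = -∑ i, ((1 + Real.exp ((inner ℝ (x i) v : ℝ)))⁻¹ * (inner ℝ (x i) g : ℝ)) := by
      rw [← Finset.sum_neg_distrib]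
      exact Finset.sum_congr rfl fun i _ => by ring
    rw [e, mul_neg] at h1
    linarith
  have hS2 : (n:ℝ)⁻¹ * ∑ i, ((1 + Real.exp ((inner ℝ (x i) v : ℝ)))⁻¹ * (inner ℝ (x i) g : ℝ)^2)
      ≤ ‖g‖^2 * gradPotential x v := by
    have h1 : ∀ i, (1 + Real.exp ((inner ℝ (x i) v : ℝ)))⁻¹ * (inner ℝ (x i) g : ℝ)^2
        ≤ (1 + Real.exp ((inner ℝ (x i) v : ℝ)))⁻¹ * ‖g‖^2 := fun i => by
      have hsq : (inner ℝ (x i) g : ℝ)^2 ≤ ‖g‖^2 := by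
        rw [← sq_abs]
        exact pow_le_pow_left₀ (abs_nonneg _) (hai i) 2
      have hφ : (0:ℝ) ≤ (1 + Real.exp ((inner ℝ (x i) v : ℝ)))⁻¹ := by positivity
      nlinarith
    calc (n:ℝ)⁻¹ * ∑ i, ((1 + Real.exp ((inner ℝ (x i) v : ℝ)))⁻¹ * (inner ℝ (x i) g : ℝ)^2)
        ≤ (n:ℝ)⁻¹ * ∑ i, ((1 + Real.exp ((inner ℝ (x i) v : ℝ)))⁻¹ * ‖g‖^2) := by
          exact mul_le_mul_of_nonneg_left (Finset.sum_le_sum fun i _ => h1 i) (by positivity)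
      _ = ‖g‖^2 * gradPotential x v := by
          unfold gradPotential
          rw [one_div, ← Finset.sum_mul]
          ring
  have hrw : logisticRisk x (v - η • g) = (n:ℝ)⁻¹ *
      ∑ i, Real.log (1 + Real.exp (-((inner ℝ (x i) v : ℝ) - η * (inner ℝ (x i) g : ℝ)))) := by
    unfold logisticRisk
    rw [one_div]
    congr 1
    exact Finset.sum_congr rfl fun i _ => by rw [hz' i]
  have hLsum : logisticRisk x v
      = (n:ℝ)⁻¹ * ∑ i, Real.log (1 + Real.exp (-(inner ℝ (x i) v : ℝ))) := by
    unfold logisticRisk; rw [one_div]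
  have main : logisticRisk x (v - η • g) ≤ logisticRisk x v
      + η * ((n:ℝ)⁻¹ * ∑ i, ((1 + Real.exp ((inner ℝ (x i) v : ℝ)))⁻¹ * (inner ℝ (x i) g : ℝ)))
      + (9/10) * η^2 * ((n:ℝ)⁻¹ *
          ∑ i, ((1 + Real.exp ((inner ℝ (x i) v : ℝ)))⁻¹ * (inner ℝ (x i) g : ℝ)^2)) := by
    rw [hrw, hLsum]
    have hstep : ∀ i ∈ Finset.univ,
        Real.log (1 + Real.exp (-((inner ℝ (x i) v : ℝ) - η * (inner ℝ (x i) g : ℝ))))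
        ≤ Real.log (1 + Real.exp (-(inner ℝ (x i) v : ℝ)))
          + (1 + Real.exp ((inner ℝ (x i) v : ℝ)))⁻¹ * (η * (inner ℝ (x i) g : ℝ))
          + (9/10) * ((1 + Real.exp ((inner ℝ (x i) v : ℝ)))⁻¹ * (η * (inner ℝ (x i) g : ℝ))^2) :=
      fun i _ => ell_smooth _ (hδ i)
    calc (n:ℝ)⁻¹ * ∑ i, Real.log (1 + Real.exp (-((inner ℝ (x i) v : ℝ) - η * (inner ℝ (x i) g : ℝ))))
        ≤ (n:ℝ)⁻¹ * ∑ i, (Real.log (1 + Real.exp (-(inner ℝ (x i) v : ℝ)))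
          + (1 + Real.exp ((inner ℝ (x i) v : ℝ)))⁻¹ * (η * (inner ℝ (x i) g : ℝ))
          + (9/10) * ((1 + Real.exp ((inner ℝ (x i) v : ℝ)))⁻¹ * (η * (inner ℝ (x i) g : ℝ))^2)) :=
          mul_le_mul_of_nonneg_left (Finset.sum_le_sum hstep) (by positivity)
      _ = (n:ℝ)⁻¹ * ∑ i, Real.log (1 + Real.exp (-(inner ℝ (x i) v : ℝ)))
          + η * ((n:ℝ)⁻¹ * ∑ i, ((1 + Real.exp ((inner ℝ (x i) v : ℝ)))⁻¹ * (inner ℝ (x i) g : ℝ)))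
          + (9/10) * η^2 * ((n:ℝ)⁻¹ *
              ∑ i, ((1 + Real.exp ((inner ℝ (x i) v : ℝ)))⁻¹ * (inner ℝ (x i) g : ℝ)^2)) := by
          rw [Finset.sum_add_distrib, Finset.sum_add_distrib]
          rw [show ∑ i, ((1 + Real.exp ((inner ℝ (x i) v : ℝ)))⁻¹ * (η * (inner ℝ (x i) g : ℝ)))
              = η * ∑ i, ((1 + Real.exp ((inner ℝ (x i) v : ℝ)))⁻¹ * (inner ℝ (x i) g : ℝ)) by
            rw [Finset.mul_sum]; exact Finset.sum_congr rfl fun i _ => by ring]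
          rw [show ∑ i, ((9:ℝ)/10 * ((1 + Real.exp ((inner ℝ (x i) v : ℝ)))⁻¹ * (η * (inner ℝ (x i) g : ℝ))^2))
              = (9/10) * η^2 * ∑ i, ((1 + Real.exp ((inner ℝ (x i) v : ℝ)))⁻¹ * (inner ℝ (x i) g : ℝ)^2) by
            rw [Finset.mul_sum]; exact Finset.sum_congr rfl fun i _ => by ring]
          ring
  rw [hS1] at main
  have hfin : (9:ℝ)/10 * η^2 * ((n:ℝ)⁻¹ *
      ∑ i, ((1 + Real.exp ((inner ℝ (x i) v : ℝ)))⁻¹ * (inner ℝ (x i) g : ℝ)^2))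
      ≤ (9/10) * η^2 * (‖g‖^2 * gradPotential x v) := by
    apply mul_le_mul_of_nonneg_left hS2 (by positivity)
  have h9 : η * ‖g‖^2 * (η * gradPotential x v) ≤ η * ‖g‖^2 * 1 :=
    mul_le_mul_of_nonneg_left hηG (by positivity)
  nlinarith [main, hfin, h9, mul_nonneg hη.le (sq_nonneg ‖g‖)]

lemma one_step {d n : ℕ} (x : Fin n → EuclideanSpace ℝ (Fin d))
    (hx : ∀ i, ‖x i‖ ≤ 1) {η : ℝ} (hη : 0 < η) (v : EuclideanSpace ℝ (Fin d))
    (hL : logisticRisk x v ≤ 1 / η) (u : EuclideanSpace ℝ (Fin d)) :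
    ‖v - η • logisticGrad x v - u‖^2
      ≤ ‖v - u‖^2 - η * logisticRisk x v + 2 * η * logisticRisk x u := by
  set g := logisticGrad x v with hg
  have hGL : gradPotential x v ≤ logisticRisk x v := G_le_L x v
  have hgn : ‖g‖ ≤ gradPotential x v := grad_norm_le x hx v
  have hL0 : 0 ≤ logisticRisk x v := L_nonneg x v
  have hG0 : 0 ≤ gradPotential x v := G_nonneg x v
  have hηL : η * logisticRisk x v ≤ 1 := by rw [le_div_iff₀ hη] at hL; linarith
  -- convexity
  have hconv : logisticRisk x v + (inner ℝ g (u - v) : ℝ) ≤ logisticRisk x u := by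
    have h1 := grad_inner x v (u - v)
    rw [← hg] at h1
    have h2 : ∀ i ∈ Finset.univ,
        Real.log (1 + Real.exp (-(inner ℝ (x i) v : ℝ)))
          + (-(1 + Real.exp ((inner ℝ (x i) v : ℝ)))⁻¹ * (inner ℝ (x i) (u - v) : ℝ))
        ≤ Real.log (1 + Real.exp (-(inner ℝ (x i) u : ℝ))) := fun i _ => by
      have h3 := ell_convex (inner ℝ (x i) v : ℝ) (inner ℝ (x i) u : ℝ)
      have h4 : (inner ℝ (x i) (u - v) : ℝ) = (inner ℝ (x i) u : ℝ) - (inner ℝ (x i) v : ℝ) := by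
        rw [inner_sub_right]
      rw [h4]; linarith
    have h5 : (n:ℝ)⁻¹ * ∑ i, (Real.log (1 + Real.exp (-(inner ℝ (x i) v : ℝ)))
          + (-(1 + Real.exp ((inner ℝ (x i) v : ℝ)))⁻¹ * (inner ℝ (x i) (u - v) : ℝ)))
        ≤ (n:ℝ)⁻¹ * ∑ i, Real.log (1 + Real.exp (-(inner ℝ (x i) u : ℝ))) :=
      mul_le_mul_of_nonneg_left (Finset.sum_le_sum h2) (by positivity)
    rw [Finset.sum_add_distrib, mul_add, ← h1] at h5
    unfold logisticRisk
    rw [one_div]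
    exact h5
  -- norm expansion
  have hexp : ‖v - η • g - u‖^2
      = ‖v - u‖^2 + 2 * η * (inner ℝ g (u - v) : ℝ) + η^2 * ‖g‖^2 := by
    have e1 : v - η • g - u = (v - u) - η • g := by abel
    rw [e1, @norm_sub_sq_real]
    have e2 : (inner ℝ (v - u) (η • g) : ℝ) = η * (inner ℝ (v - u) g : ℝ) := real_inner_smul_right _ _ _
    have e3 : (inner ℝ (v - u) g : ℝ) = -(inner ℝ g (u - v) : ℝ) := by
      rw [inner_sub_left, inner_sub_right, real_inner_comm v g, real_inner_comm u g]; ring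
    have e4 : ‖η • g‖^2 = η^2 * ‖g‖^2 := by
      rw [norm_smul, mul_pow, Real.norm_eq_abs, sq_abs]
    rw [e2, e3, e4]; ring
  have hg2 : η^2 * ‖g‖^2 ≤ η * logisticRisk x v := by
    have hgL : ‖g‖ ≤ logisticRisk x v := hgn.trans hGL
    have h2 : η^2 * ‖g‖^2 ≤ η^2 * (logisticRisk x v)^2 := by
      nlinarith [mul_le_mul hgL hgL (norm_nonneg g) hL0, sq_nonneg η]
    nlinarith [h2, hηL, mul_nonneg hη.le hL0]
  have hc : 2 * η * (inner ℝ g (u - v) : ℝ) ≤ 2 * η * (logisticRisk x u - logisticRisk x v) := by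
    have := hconv
    nlinarith
  rw [hexp]
  linarith

/-- risk bound in the stable phase. -/
theorem gd_stable_phase_risk_bound {d n : ℕ} (hn : 0 < n)
    (x : Fin n → EuclideanSpace ℝ (Fin d)) (hx : ∀ i, ‖x i‖ ≤ 1)
    (γ : ℝ) (hγ : 0 < γ) (wstar : EuclideanSpace ℝ (Fin d)) (hws : ‖wstar‖ = 1)
    (hmargin : ∀ i, γ ≤ (inner ℝ (x i) wstar : ℝ))
    (η : ℝ) (hη : 0 < η) (w : ℕ → EuclideanSpace ℝ (Fin d))
    (hw0 : w 0 = 0)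
    (hgd : ∀ t, w (t + 1) = w t - η • logisticGrad x (w t))
    (s : ℕ) (hs : logisticRisk x (w s) ≤ 1 / η)
    (t : ℕ) (hts : s < t) (hlarge : 1 ≤ γ ^ 2 * η * (t - s : ℕ)) :
    logisticRisk x (w t)
      ≤ (2 * expPotential x (w s) + (Real.log (γ ^ 2 * η * (t - s : ℕ))) ^ 2)
          / (γ ^ 2 * η * (t - s : ℕ)) := by
  set m := t - s with hm
  have hm1 : 1 ≤ m := by omega
  have htm : t = s + m := by omega
  set R : ℝ := γ ^ 2 * η * (m : ℕ) with hRdef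
  have hR1 : (1:ℝ) ≤ R := hlarge
  have hR0 : (0:ℝ) < R := lt_of_lt_of_le one_pos hR1
  have hlogR : 0 ≤ Real.log R := Real.log_nonneg hR1
  -- maintenance of the loss bound
  have bound : ∀ k, logisticRisk x (w (s + k)) ≤ 1 / η := by
    intro k
    induction k with
    | zero => simpa using hs
    | succ k ih =>
      have h1 := descent x hx hη (w (s+k)) ih
      rw [show s + (k+1) = (s+k)+1 by omega, hgd (s+k)]
      exact le_trans h1 ih
  have dec : ∀ k, logisticRisk x (w (s+k+1)) ≤ logisticRisk x (w (s+k)) := fun k => by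
    rw [hgd (s+k)]; exact descent x hx hη _ (bound k)
  have anti : ∀ k, k ≤ m → logisticRisk x (w t) ≤ logisticRisk x (w (s+k)) := by
    intro k hk
    have h3 : ∀ j, logisticRisk x (w (s+k+j)) ≤ logisticRisk x (w (s+k)) := by
      intro j
      induction j with
      | zero => exact le_refl _
      | succ j ih =>
        have h4 := dec (k+j)
        rw [show s+(k+j)+1 = s+k+(j+1) by omega] at h4
        exact le_trans h4 (by rw [show s+k+j = s+(k+j) by omega] at ih; exact ih)
    have h2 := h3 (m - k)
    rw [show s + k + (m-k) = s + m by omega, ← htm] at h2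
    exact h2
  -- telescoping
  have tel : ∀ u : EuclideanSpace ℝ (Fin d), ∀ j : ℕ,
      ‖w (s+j) - u‖^2 ≤ ‖w s - u‖^2
        - η * ∑ k ∈ Finset.range j, logisticRisk x (w (s+k))
        + 2*η*(j:ℝ)*(logisticRisk x u) := by
    intro u j
    induction j with
    | zero => simp
    | succ j ih =>
      have h1 := one_step x hx hη (w (s+j)) (bound j) u
      rw [show s+(j+1) = (s+j)+1 by omega, hgd (s+j), Finset.sum_range_succ]
      push_cast
      calc ‖w (s+j) - η • logisticGrad x (w (s+j)) - u‖^2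
          ≤ ‖w (s+j) - u‖^2 - η * logisticRisk x (w (s+j)) + 2*η*logisticRisk x u := h1
        _ ≤ ‖w s - u‖ ^ 2
            - η * (∑ k ∈ Finset.range j, logisticRisk x (w (s + k)) + logisticRisk x (w (s+j)))
            + 2 * η * ((j:ℝ) + 1) * logisticRisk x u := by nlinarith [ih]
  -- comparator
  set u : EuclideanSpace ℝ (Fin d) := w s + (Real.log R / γ) • wstar with hu
  have htel := tel u m
  rw [← htm] at htel
  have hsum : (m:ℝ) * logisticRisk x (w t) ≤ ∑ k ∈ Finset.range m, logisticRisk x (w (s+k)) := by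
    calc (m:ℝ) * logisticRisk x (w t) = ∑ _k ∈ Finset.range m, logisticRisk x (w t) := by
          rw [Finset.sum_const, Finset.card_range, nsmul_eq_mul]
      _ ≤ _ := Finset.sum_le_sum fun k hk => anti k (le_of_lt (Finset.mem_range.mp hk))
  have hnorm : ‖w s - u‖^2 = (Real.log R / γ)^2 := by
    rw [hu, show w s - (w s + (Real.log R / γ) • wstar) = -((Real.log R / γ) • wstar) by abel]
    rw [norm_neg, norm_smul, hws, mul_one, Real.norm_eq_abs, sq_abs]
  have hLu : logisticRisk x u ≤ expPotential x (w s) / R := by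
    refine (L_le_F x u).trans ?_
    unfold expPotential
    have hper : ∀ i ∈ Finset.univ, Real.exp (-(inner ℝ (x i) u : ℝ))
        ≤ Real.exp (-(inner ℝ (x i) (w s) : ℝ)) * R⁻¹ := by
      intro i _
      have e1 : (inner ℝ (x i) u : ℝ)
          = (inner ℝ (x i) (w s) : ℝ) + (Real.log R / γ) * (inner ℝ (x i) wstar : ℝ) := by
        rw [hu, inner_add_right, real_inner_smul_right]
      have h2 : Real.log R ≤ (Real.log R / γ) * (inner ℝ (x i) wstar : ℝ) := by
        have h3 := hmargin i
        have h4 : 0 ≤ Real.log R / γ := div_nonneg hlogR hγ.le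
        calc Real.log R = (Real.log R / γ) * γ := by field_simp
          _ ≤ (Real.log R / γ) * (inner ℝ (x i) wstar : ℝ) := by nlinarith
      have h5 : -(inner ℝ (x i) u : ℝ) ≤ -(inner ℝ (x i) (w s) : ℝ) - Real.log R := by
        rw [e1]; linarith
      calc Real.exp (-(inner ℝ (x i) u : ℝ))
          ≤ Real.exp (-(inner ℝ (x i) (w s) : ℝ) - Real.log R) := Real.exp_le_exp.mpr h5
        _ = Real.exp (-(inner ℝ (x i) (w s) : ℝ)) * R⁻¹ := by
            rw [Real.exp_sub, Real.exp_log hR0, div_eq_mul_inv]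
    calc (1/(n:ℝ)) * ∑ i, Real.exp (-(inner ℝ (x i) u : ℝ))
        ≤ (1/(n:ℝ)) * ∑ i, Real.exp (-(inner ℝ (x i) (w s) : ℝ)) * R⁻¹ :=
          mul_le_mul_of_nonneg_left (Finset.sum_le_sum hper) (by positivity)
      _ = expPotential x (w s) / R := by
          unfold expPotential
          rw [← Finset.sum_mul, div_eq_mul_inv]
          ring
  -- put it together
  have hfin : η * ((m:ℝ) * logisticRisk x (w t))
      ≤ (Real.log R / γ)^2 + 2*η*(m:ℝ)*(expPotential x (w s) / R) := by
    have h0 : (0:ℝ) ≤ ‖w t - u‖^2 := sq_nonneg _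
    have h6 : η * ((m:ℝ) * logisticRisk x (w t))
        ≤ η * ∑ k ∈ Finset.range m, logisticRisk x (w (s+k)) :=
      mul_le_mul_of_nonneg_left hsum hη.le
    have h7 : 2*η*(m:ℝ)*(logisticRisk x u) ≤ 2*η*(m:ℝ)*(expPotential x (w s) / R) := by
      apply mul_le_mul_of_nonneg_left hLu (by positivity)
    rw [hnorm] at htel
    linarith
  have hγ2 : (0:ℝ) < γ^2 := by positivity
  have e5 : γ^2 * (Real.log R/γ)^2 = Real.log R ^ 2 := by field_simp
  have e6 : γ^2 * (2*η*(m:ℝ)*(expPotential x (w s) / R)) = 2 * expPotential x (w s) := by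
    have : γ^2 * (2*η*(m:ℝ)*(expPotential x (w s) / R)) = 2 * (R * (expPotential x (w s) / R)) := by
      rw [hRdef]; ring
    rw [this, mul_div_cancel₀ _ (ne_of_gt hR0)]
  rw [le_div_iff₀ hR0]
  have h8 := mul_le_mul_of_nonneg_left hfin hγ2.le
  have e7 : γ^2 * (η * ((m:ℝ) * logisticRisk x (w t))) = logisticRisk x (w t) * R := by
    rw [hRdef]; ring
  rw [mul_add, e5, e6, e7] at h8
  linarith
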